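/- arXiv:2203.11927 — 2 statements merged into one kernel-verified Lean document; each statement's English description precedes it below -/
import Mathlib

section
/- (No merging under property I) Suppose σ_1, …, σ_r satisfy property I with witnesses α_1, …, α_r. Then for every nonempty I ⊆ {1,…,r} and every p ∈ {1,…,r} \ I with σ_I ∩ σ_p ≠ ∅, one has c(I ∪ {p}) = c(I); that is, adjoining a nonface meeting σ_I never changes the number of connected components of the intersection graph. -/
open Finset LaurentPolynomial

noncomputable section

/-- The union `σ_I = ⋃_{i ∈ I} σ_i`. -/
def unionOver {ι V : Type*} [DecidableEq V] (σ : ι → Finset V) (I : Finset ι) : Finset V :=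
  I.sup σ

/-- The intersection graph `G_I` on the vertex set `I`. -/
def interGraph {ι V : Type*} [DecidableEq V] (σ : ι → Finset V) (I : Finset ι) :
    SimpleGraph {i // i ∈ I} where
  Adj i j := i ≠ j ∧ (σ i.1 ∩ σ j.1).Nonempty
  symm := by
    refine ⟨fun i j h => ?_⟩
    exact ⟨h.1.symm, by rw [Finset.inter_comm]; exact h.2⟩
  loopless := by refine ⟨fun i h => ?_⟩; exact h.1 rfl

/-- `c(I)`, the number of connected components of `G_I`. -/
def compCount {ι V : Type*} [DecidableEq V] (σ : ι → Finset V) (I : Finset ι) : ℕ :=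
  Nat.card (interGraph σ I).ConnectedComponent

/-- Property I. -/
def PropertyI {ι V W : Type*} [DecidableEq V] [DecidableEq W]
    (σ : ι → Finset V) (α : ι → Finset W) : Prop :=
  (∀ i, (α i).card + 1 = (σ i).card) ∧
  ∀ I : Finset ι, I.Nonempty → ∀ p ∉ I,
    (unionOver σ I ∩ σ p = ∅ → unionOver α I ∩ α p = ∅) ∧
    ((unionOver σ I ∩ σ p).Nonempty →
      (unionOver α I ∩ α p).card + 1 = (unionOver σ I ∩ σ p).card)

/-- The simplicial chromatic polynomial. -/
def simpChrom {ι : Type*} [Fintype ι] [DecidableEq ι] {n : ℕ} (σ : ι → Finset (Fin n)) :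
    LaurentPolynomial ℤ :=
  T (n : ℤ) +
  ∑ I ∈ (univ : Finset ι).powerset.filter (fun I => I.Nonempty),
    (-1) ^ I.card *
      T ((n : ℤ) - ((unionOver σ I).card : ℤ) + (compCount σ I : ℤ))

/-- Faces of the complex whose minimal nonfaces are the `α i`. -/
def facesOf {ι : Type*} [Fintype ι] {N : ℕ} (α : ι → Finset (Fin N)) :
    Finset (Finset (Fin N)) :=
  (univ : Finset (Finset (Fin N))).filter (fun F => ∀ i, ¬ α i ⊆ F)

/-- Coefficient of `t^k` in a Laurent polynomial. -/
def lcoeff (p : LaurentPolynomial ℤ) (k : ℤ) : ℤ := p.coeff k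

end

/-!
A nonface `σ_p` meeting `σ_I` meets `σ_i` for the indices `i` of only one connected component
of `G_I`. Otherwise split `I = A ∪ B` with `A` one such component: `σ_A` and `σ_B` are
disjoint, so by property I so are `α_A` and `α_B`, and the defects
`|σ_X ∩ σ_p| - |α_X ∩ α_p| = 1` for `X = A` and `X = B` add up to `2` for `X = I`, where
property I demands `1`. Hence the inclusion `G_I → G_{I ∪ {p}}` is injective on connected
components, and it is surjective because `p` is adjacent to some vertex of `G_I`.
-/

section

open SimpleGraph

theorem SimpleGraph.Reachable.map_of_forall_adj {V V' : Type*} {G : SimpleGraph V}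
    {G' : SimpleGraph V'} (f : V → V') (hf : ∀ u v, G.Adj u v → G'.Reachable (f u) (f v))
    {u v : V} (huv : G.Reachable u v) : G'.Reachable (f u) (f v) := by
  obtain ⟨w⟩ := huv
  induction w with
  | nil => rfl
  | cons hadj _ ih => exact (hf _ _ hadj).trans ih

variable {ι V W : Type*} [DecidableEq V] [DecidableEq W]
  {σ : ι → Finset V} {α : ι → Finset W}

lemma mem_unionOver {I : Finset ι} {x : V} : x ∈ unionOver σ I ↔ ∃ i ∈ I, x ∈ σ i :=
  Finset.mem_sup

lemma exists_inter_nonempty_of_unionOver_inter {I : Finset ι} {s : Finset V}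
    (h : (unionOver σ I ∩ s).Nonempty) : ∃ i ∈ I, (σ i ∩ s).Nonempty := by
  obtain ⟨x, hx⟩ := h
  obtain ⟨i, hi, hxi⟩ := mem_unionOver.1 (Finset.mem_inter.1 hx).1
  exact ⟨i, hi, x, Finset.mem_inter.2 ⟨hxi, (Finset.mem_inter.1 hx).2⟩⟩

lemma Finset.Nonempty.of_unionOver_inter {I : Finset ι} {s : Finset V}
    (h : (unionOver σ I ∩ s).Nonempty) : I.Nonempty :=
  let ⟨i, hi, _⟩ := exists_inter_nonempty_of_unionOver_inter h
  ⟨i, hi⟩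

lemma unionOver_union [DecidableEq ι] (σ : ι → Finset V) (A B : Finset ι) :
    unionOver σ (A ∪ B) = unionOver σ A ∪ unionOver σ B :=
  Finset.sup_union

theorem PropertyI.not_nonempty_inter_of_disjoint [DecidableEq ι] (h : PropertyI σ α)
    {A B : Finset ι} (hAB : Disjoint A B) (hσ : Disjoint (unionOver σ A) (unionOver σ B))
    {p : ι} (hpA : p ∉ A) (hpB : p ∉ B) (hA : (unionOver σ A ∩ σ p).Nonempty) :
    ¬ (unionOver σ B ∩ σ p).Nonempty := by
  intro hB
  have hAne := hA.of_unionOver_inter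
  have hα : Disjoint (unionOver α A) (unionOver α B) := by
    refine Finset.disjoint_sup_right.2 fun j hj => Finset.disjoint_iff_inter_eq_empty.2 ?_
    refine (h.2 A hAne j (Finset.disjoint_right.1 hAB hj)).1 ?_
    exact Finset.disjoint_iff_inter_eq_empty.1 (hσ.mono_right (Finset.le_sup hj))
  have hpAB : p ∉ A ∪ B := by simp [hpA, hpB]
  have hunion := (h.2 (A ∪ B) (hAne.mono Finset.subset_union_left) p hpAB).2
  rw [unionOver_union, unionOver_union, Finset.union_inter_distrib_right,
    Finset.union_inter_distrib_right,
    Finset.card_union_of_disjoint (hσ.mono Finset.inter_subset_left Finset.inter_subset_left),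
    Finset.card_union_of_disjoint (hα.mono Finset.inter_subset_left Finset.inter_subset_left)]
    at hunion
  have hA_p := (h.2 A hAne p hpA).2 hA
  have hB_p := (h.2 B hB.of_unionOver_inter p hpB).2 hB
  have := hunion (hA.mono Finset.subset_union_left)
  omega

theorem PropertyI.reachable_of_inter_nonempty [DecidableEq ι] (h : PropertyI σ α)
    {I : Finset ι} {p : ι} (hp : p ∉ I) {u v : I} (hu : (σ u ∩ σ p).Nonempty)
    (hv : (σ v ∩ σ p).Nonempty) : (interGraph σ I).Reachable u v := by
  classical
  by_contra huv
  set A := I.filter fun i => ∃ hi : i ∈ I, (interGraph σ I).Reachable u ⟨i, hi⟩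
  have huA : u.1 ∈ A := Finset.mem_filter.2 ⟨u.2, u.2, Reachable.refl _⟩
  have hvA : v.1 ∈ I \ A :=
    Finset.mem_sdiff.2 ⟨v.2, fun hv' => huv (Finset.mem_filter.1 hv').2.2⟩
  have hσ : Disjoint (unionOver σ A) (unionOver σ (I \ A)) := by
    refine Finset.disjoint_left.2 fun x hxA hxB => ?_
    obtain ⟨a, ha, hxa⟩ := mem_unionOver.1 hxA
    obtain ⟨b, hb, hxb⟩ := mem_unionOver.1 hxB
    obtain ⟨hbI, hbA⟩ := Finset.mem_sdiff.1 hb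
    obtain ⟨-, haI, hua⟩ := Finset.mem_filter.1 ha
    have hab : (interGraph σ I).Adj ⟨a, haI⟩ ⟨b, hbI⟩ :=
      ⟨fun e => hbA (Subtype.mk.inj e ▸ ha), x, Finset.mem_inter.2 ⟨hxa, hxb⟩⟩
    exact hbA (Finset.mem_filter.2 ⟨hbI, hbI, hua.trans hab.reachable⟩)
  refine h.not_nonempty_inter_of_disjoint Finset.disjoint_sdiff hσ
    (fun hpA => hp (Finset.filter_subset _ _ hpA)) (fun hpB => hp (Finset.sdiff_subset hpB))
    (hu.mono ?_) (hv.mono ?_)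
  · exact Finset.inter_subset_inter_right (Finset.le_sup (f := σ) huA)
  · exact Finset.inter_subset_inter_right (Finset.le_sup (f := σ) hvA)

def interGraph.homOfSubset {I J : Finset ι} (hIJ : I ⊆ J) :
    interGraph σ I →g interGraph σ J where
  toFun i := ⟨i, hIJ i.2⟩
  map_rel' hij := ⟨fun e => hij.1 (Subtype.ext (Subtype.mk.inj e)), hij.2⟩

@[simp]
lemma interGraph.coe_homOfSubset_apply {I J : Finset ι} (hIJ : I ⊆ J) (i : I) :
    (interGraph.homOfSubset (σ := σ) hIJ i : ι) = i :=
  rfl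

section Insert

variable [DecidableEq ι] {I : Finset ι} {p : ι}

theorem surjective_map_homOfSubset_insert {i₀ : ι} (hi₀ : i₀ ∈ I)
    (hi₀p : (σ i₀ ∩ σ p).Nonempty) :
    Function.Surjective
      (ConnectedComponent.map (interGraph.homOfSubset (σ := σ) (I.subset_insert p))) := by
  refine ConnectedComponent.ind fun y => ?_
  by_cases hy : y.1 ∈ I
  · exact ⟨(interGraph σ I).connectedComponentMk ⟨y.1, hy⟩, ConnectedComponent.map_mk _ _⟩
  · refine ⟨(interGraph σ I).connectedComponentMk ⟨i₀, hi₀⟩, ?_⟩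
    rw [ConnectedComponent.map_mk]
    refine ConnectedComponent.sound (Adj.reachable ⟨fun e => hy (e ▸ hi₀), ?_⟩)
    show (σ i₀ ∩ σ y.1).Nonempty
    rwa [Finset.eq_of_mem_insert_of_notMem y.2 hy]

theorem injective_map_homOfSubset_insert {i₀ : ι} (hi₀ : i₀ ∈ I)
    (hi₀p : (σ i₀ ∩ σ p).Nonempty)
    (hconn : ∀ u v : I, (σ u ∩ σ p).Nonempty → (σ v ∩ σ p).Nonempty →
      (interGraph σ I).Reachable u v) :
    Function.Injective
      (ConnectedComponent.map (interGraph.homOfSubset (σ := σ) (I.subset_insert p))) := by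
  let r : {x // x ∈ insert p I} → I := fun y =>
    if hy : y.1 ∈ I then ⟨y.1, hy⟩ else ⟨i₀, hi₀⟩
  have hr : ∀ y z, (interGraph σ (insert p I)).Adj y z →
      (interGraph σ I).Reachable (r y) (r z) := by
    rintro y z ⟨hyz, hmeet⟩
    by_cases hy : y.1 ∈ I <;> by_cases hz : z.1 ∈ I <;>
      simp only [r, hy, hz, dif_pos, dif_neg, not_false_eq_true]
    · exact Adj.reachable ⟨fun e => hyz (Subtype.ext (Subtype.mk.inj e)), hmeet⟩
    · rw [Finset.eq_of_mem_insert_of_notMem z.2 hz] at hmeet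
      exact hconn ⟨y.1, hy⟩ _ hmeet hi₀p
    · rw [Finset.inter_comm, Finset.eq_of_mem_insert_of_notMem y.2 hy] at hmeet
      exact hconn _ ⟨z.1, hz⟩ hi₀p hmeet
    · exact absurd (Subtype.ext ((Finset.eq_of_mem_insert_of_notMem y.2 hy).trans
        (Finset.eq_of_mem_insert_of_notMem z.2 hz).symm)) hyz
  refine ConnectedComponent.ind₂ fun u v huv => ?_
  rw [ConnectedComponent.map_mk, ConnectedComponent.map_mk, ConnectedComponent.eq] at huv
  simpa [r] using ConnectedComponent.sound (huv.map_of_forall_adj r hr)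

theorem compCount_insert_of_reachable (hmeet : (unionOver σ I ∩ σ p).Nonempty)
    (hconn : ∀ u v : I, (σ u ∩ σ p).Nonempty → (σ v ∩ σ p).Nonempty →
      (interGraph σ I).Reachable u v) :
    compCount σ (insert p I) = compCount σ I := by
  obtain ⟨i₀, hi₀, hi₀p⟩ := exists_inter_nonempty_of_unionOver_inter hmeet
  exact (Nat.card_congr (Equiv.ofBijective _
    ⟨injective_map_homOfSubset_insert hi₀ hi₀p hconn,
      surjective_map_homOfSubset_insert hi₀ hi₀p⟩)).symm

end Insert

end

/-- no merging under property I: under property I, for every nonempty `I`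
and `p ∉ I` with `σ_I ∩ σ_p ≠ ∅`, one has `c(I ∪ {p}) = c(I)`. -/
theorem stmt_17 {V W : Type*} [DecidableEq V] [DecidableEq W] {r : ℕ}
    (σ : Fin r → Finset V) (α : Fin r → Finset W)
    (h : PropertyI σ α) :
    ∀ I : Finset (Fin r), I.Nonempty → ∀ p ∉ I,
      (unionOver σ I ∩ σ p).Nonempty →
      compCount σ (insert p I) = compCount σ I := by
  intro I _ p hp hmeet
  exact compCount_insert_of_reachable hmeet fun _ _ => h.reachable_of_inter_nonempty hp
end

section
/- (Lowest coefficient is the reduced Euler characteristic of the auxiliary complex) Suppose σ_1, …, σ_r satisfy property I with witnesses α_1, …, α_r ⊆ {1,…,N}. Then the coefficient of t^{n−N} in χ_c(S)(t) equals Σ_{F ∈ T(S)} (−1)^{N−|F|} = (−1)^{N−1} χ̃(T(S)), where χ̃(T) := −Σ_{F ∈ T} (−1)^{|F|} (the sum over all faces of T including the empty face) is the reduced Euler characteristic of T. -/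
open Finset LaurentPolynomial

/-! The identity behind the theorem is `|α_I| + c(I) = |σ_I|` for every `I`. Inside one
component of `G_I` the sets `σ_i` can be added one at a time, each meeting the union of the
previous ones, and property I keeps `|σ| - |α|` unchanged at every such step; so it equals `1` on
each component, while distinct components have disjoint `σ`-unions and, by property I, disjoint
`α`-unions. Hence the term of `I` in `χ_c(S)` is `(-1)^|I| t^(n - |α_I|)`, which reaches `t^(n-N)`
exactly when the `α_i` with `i ∈ I` cover `{1,…,N}`. Inclusion–exclusion over the minimal nonfaces
`α_i` turns the faces sum into the same signed count of covers. -/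

section Union

variable {ι V : Type*} [DecidableEq ι] [DecidableEq V]

lemma unionOver_insert (σ : ι → Finset V) (p : ι) (P : Finset ι) :
    unionOver σ (insert p P) = σ p ∪ unionOver σ P :=
  Finset.sup_insert

lemma card_unionOver_biUnion {κ : Type*} (σ : ι → Finset V) (s : Finset κ) (A : κ → Finset ι)
    (hA : (s : Set κ).PairwiseDisjoint fun c => unionOver σ (A c)) :
    (unionOver σ (s.biUnion A)).card = ∑ c ∈ s, (unionOver σ (A c)).card := by
  rw [unionOver, Finset.sup_biUnion, Finset.sup_eq_biUnion]
  exact Finset.card_biUnion hA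

end Union

namespace PropertyI

variable {ι V W : Type*} [DecidableEq V] [DecidableEq W] {σ : ι → Finset V} {α : ι → Finset W}

lemma card_unionOver_insert [DecidableEq ι] (h : PropertyI σ α) {P : Finset ι} (hP : P.Nonempty)
    {p : ι} (hp : p ∉ P) (hmeet : (unionOver σ P ∩ σ p).Nonempty)
    (hPc : (unionOver α P).card + 1 = (unionOver σ P).card) :
    (unionOver α (insert p P)).card + 1 = (unionOver σ (insert p P)).card := by
  have hinter := (h.2 P hP p hp).2 hmeet
  have hσ := Finset.card_union_add_card_inter (unionOver σ P) (σ p)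
  have hα := Finset.card_union_add_card_inter (unionOver α P) (α p)
  rw [unionOver_insert, unionOver_insert, Finset.union_comm (σ p), Finset.union_comm (α p)]
  have hp_card := h.1 p
  omega

lemma disjoint_unionOver (h : PropertyI σ α) {P Q : Finset ι} (hP : P.Nonempty)
    (hPQ : Disjoint P Q) (hσ : Disjoint (unionOver σ P) (unionOver σ Q)) :
    Disjoint (unionOver α P) (unionOver α Q) := by
  refine Finset.disjoint_sup_right.2 fun q hq => ?_
  have hσq : unionOver σ P ∩ σ q = ∅ :=
    Finset.disjoint_iff_inter_eq_empty.1 (hσ.mono_right (Finset.le_sup hq))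
  exact Finset.disjoint_iff_inter_eq_empty.2
    ((h.2 P hP q (Finset.disjoint_right.1 hPQ hq)).1 hσq)

end PropertyI

def IsLinked {ι V : Type*} [DecidableEq V] (σ : ι → Finset V) (A : Finset ι) : Prop :=
  ∀ P ⊂ A, P.Nonempty → ∃ p ∈ A, p ∉ P ∧ (unionOver σ P ∩ σ p).Nonempty

lemma PropertyI.card_unionOver_add_one_of_isLinked {ι V W : Type*} [DecidableEq ι]
    [DecidableEq V] [DecidableEq W] {σ : ι → Finset V} {α : ι → Finset W} (h : PropertyI σ α)
    {A : Finset ι} (hA : IsLinked σ A) (hne : A.Nonempty) :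
    (unionOver α A).card + 1 = (unionOver σ A).card := by
  set good := A.powerset.filter
    fun P => P.Nonempty ∧ (unionOver α P).card + 1 = (unionOver σ P).card
  obtain ⟨a, ha⟩ := hne
  have ha_good : {a} ∈ good := Finset.mem_filter.2
    ⟨Finset.mem_powerset.2 (Finset.singleton_subset_iff.2 ha), Finset.singleton_nonempty a,
      by simpa [unionOver] using h.1 a⟩
  obtain ⟨P, hP, hmax⟩ := Finset.exists_maximal ⟨_, ha_good⟩
  simp only [good, Finset.mem_filter, Finset.mem_powerset] at hP hmax
  obtain ⟨hPA, hPne, hPc⟩ := hP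
  obtain rfl | hPA := hPA.eq_or_ssubset
  · exact hPc
  obtain ⟨p, hpA, hpP, hmeet⟩ := hA P hPA hPne
  have hle := hmax ⟨Finset.insert_subset hpA hPA.subset, Finset.insert_nonempty p P,
    h.card_unionOver_insert hPne hpP hmeet hPc⟩ (Finset.subset_insert p P)
  exact absurd (hle (Finset.mem_insert_self p P)) hpP

section Components

open SimpleGraph

variable {ι V : Type*} [DecidableEq V] (σ : ι → Finset V) (I : Finset ι)

open Classical in
noncomputable def componentFinset (c : (interGraph σ I).ConnectedComponent) : Finset ι :=
  I.filter fun i => ∃ hi : i ∈ I, (interGraph σ I).connectedComponentMk ⟨i, hi⟩ = c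

variable {σ I}

lemma val_mem_componentFinset {c : (interGraph σ I).ConnectedComponent} {x : {i // i ∈ I}} :
    x.1 ∈ componentFinset σ I c ↔ (interGraph σ I).connectedComponentMk x = c := by
  simp [componentFinset, x.2]

lemma mem_componentFinset {c : (interGraph σ I).ConnectedComponent} {i : ι} :
    i ∈ componentFinset σ I c ↔
      ∃ hi : i ∈ I, (interGraph σ I).connectedComponentMk ⟨i, hi⟩ = c := by
  simp [componentFinset]

lemma componentFinset_nonempty (c : (interGraph σ I).ConnectedComponent) :
    (componentFinset σ I c).Nonempty := by
  induction c using ConnectedComponent.ind with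
  | h x => exact ⟨x.1, val_mem_componentFinset.2 rfl⟩

lemma biUnion_componentFinset [DecidableEq ι] [Fintype (interGraph σ I).ConnectedComponent] :
    Finset.univ.biUnion (componentFinset σ I) = I := by
  ext i
  simp only [Finset.mem_biUnion, Finset.mem_univ, true_and, mem_componentFinset]
  exact ⟨fun ⟨_, hi, _⟩ => hi, fun hi => ⟨_, hi, rfl⟩⟩

lemma connectedComponentMk_eq_of_inter_nonempty {x y : {i // i ∈ I}}
    (hxy : (σ x.1 ∩ σ y.1).Nonempty) :
    (interGraph σ I).connectedComponentMk x = (interGraph σ I).connectedComponentMk y := by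
  by_cases h : x = y
  · rw [h]
  · exact ConnectedComponent.connectedComponentMk_eq_of_adj ⟨h, hxy⟩

lemma disjoint_componentFinset {c d : (interGraph σ I).ConnectedComponent} (hcd : c ≠ d) :
    Disjoint (componentFinset σ I c) (componentFinset σ I d) := by
  refine Finset.disjoint_left.2 fun i hc hd => hcd ?_
  obtain ⟨hi, rfl⟩ := mem_componentFinset.1 hc
  obtain ⟨-, rfl⟩ := mem_componentFinset.1 hd
  rfl

lemma disjoint_unionOver_componentFinset {c d : (interGraph σ I).ConnectedComponent}
    (hcd : c ≠ d) :
    Disjoint (unionOver σ (componentFinset σ I c)) (unionOver σ (componentFinset σ I d)) := by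
  refine Finset.disjoint_sup_left.2 fun a ha => Finset.disjoint_sup_right.2 fun b hb => ?_
  obtain ⟨haI, rfl⟩ := mem_componentFinset.1 ha
  obtain ⟨hbI, rfl⟩ := mem_componentFinset.1 hb
  rw [Finset.disjoint_iff_inter_eq_empty, ← Finset.not_nonempty_iff_eq_empty]
  exact fun hab => hcd (connectedComponentMk_eq_of_inter_nonempty hab)

lemma isLinked_componentFinset (c : (interGraph σ I).ConnectedComponent) :
    IsLinked σ (componentFinset σ I c) := by
  intro P hPc ⟨a, haP⟩
  obtain ⟨b, hbc, hbP⟩ := Finset.exists_of_ssubset hPc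
  obtain ⟨haI, rfl⟩ := mem_componentFinset.1 (hPc.subset haP)
  obtain ⟨hbI, hb⟩ := mem_componentFinset.1 hbc
  obtain ⟨w⟩ := ConnectedComponent.exact hb.symm
  obtain ⟨d, -, hdP, hdP'⟩ := w.exists_boundary_dart {x | x.1 ∈ P} haP hbP
  refine ⟨d.snd.1, ?_, hdP', ?_⟩
  · rw [val_mem_componentFinset, ← ConnectedComponent.connectedComponentMk_eq_of_adj d.adj]
    exact val_mem_componentFinset.1 (hPc.subset hdP)
  · obtain ⟨v, hv⟩ := d.adj.2
    exact ⟨v, Finset.mem_inter.2 ⟨Finset.mem_sup.2 ⟨_, hdP, (Finset.mem_inter.1 hv).1⟩,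
      (Finset.mem_inter.1 hv).2⟩⟩

end Components

theorem PropertyI.card_unionOver_add_compCount {ι V W : Type*} [DecidableEq ι] [DecidableEq V]
    [DecidableEq W] {σ : ι → Finset V} {α : ι → Finset W} (h : PropertyI σ α) (I : Finset ι) :
    (unionOver α I).card + compCount σ I = (unionOver σ I).card := by
  classical
  have hσ : ((univ : Finset (interGraph σ I).ConnectedComponent) : Set _).PairwiseDisjoint
      fun c => unionOver σ (componentFinset σ I c) :=
    fun c _ d _ hcd => disjoint_unionOver_componentFinset hcd
  have hα : ((univ : Finset (interGraph σ I).ConnectedComponent) : Set _).PairwiseDisjoint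
      fun c => unionOver α (componentFinset σ I c) :=
    fun c _ d _ hcd => h.disjoint_unionOver (componentFinset_nonempty c)
      (disjoint_componentFinset hcd) (disjoint_unionOver_componentFinset hcd)
  calc (unionOver α I).card + compCount σ I
      = ∑ c, ((unionOver α (componentFinset σ I c)).card + 1) := by
        rw [Finset.sum_add_distrib, Finset.sum_const, smul_eq_mul, mul_one, Finset.card_univ,
          ← card_unionOver_biUnion α _ _ hα, biUnion_componentFinset, compCount,
          Nat.card_eq_fintype_card]
    _ = ∑ c, (unionOver σ (componentFinset σ I c)).card :=
        Finset.sum_congr rfl fun c _ => h.card_unionOver_add_one_of_isLinked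
          (isLinked_componentFinset c) (componentFinset_nonempty c)
    _ = (unionOver σ I).card := by
        rw [← card_unionOver_biUnion σ _ _ hσ, biUnion_componentFinset]

lemma compCount_empty {ι V : Type*} [DecidableEq V] (σ : ι → Finset V) : compCount σ ∅ = 0 := by
  simp [compCount]

lemma coeff_neg_one_pow_mul_T (k : ℕ) (m j : ℤ) :
    ((-1 : LaurentPolynomial ℤ) ^ k * T m).coeff j = if m = j then (-1) ^ k else 0 := by
  rw [show (-1 : LaurentPolynomial ℤ) ^ k = C ((-1) ^ k) by simp, ← single_eq_C_mul_T,
    AddMonoidAlgebra.coeff_single, Finsupp.single_apply]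

section Chromatic

variable {ι : Type*} [Fintype ι] [DecidableEq ι] {n : ℕ}

lemma simpChrom_eq_sum (σ : ι → Finset (Fin n)) :
    simpChrom σ = ∑ I : Finset ι,
      (-1) ^ I.card * T ((n : ℤ) - ((unionOver σ I).card : ℤ) + (compCount σ I : ℤ)) := by
  rw [simpChrom, ← Finset.add_sum_erase _ _ (Finset.mem_univ ∅), Finset.powerset_univ]
  congr 1
  · simp [unionOver, compCount_empty]
  · refine Finset.sum_congr ?_ fun _ _ => rfl
    ext I
    simp [Finset.nonempty_iff_ne_empty]

lemma PropertyI.lcoeff_simpChrom_sub {N : ℕ} {σ : ι → Finset (Fin n)} {α : ι → Finset (Fin N)}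
    (h : PropertyI σ α) :
    lcoeff (simpChrom σ) ((n : ℤ) - N) =
      ∑ I ∈ univ.filter (fun I => unionOver α I = univ), (-1) ^ I.card := by
  rw [lcoeff, simpChrom_eq_sum, AddMonoidAlgebra.coeff_sum, Finset.sum_apply', Finset.sum_filter]
  refine Finset.sum_congr rfl fun I _ => ?_
  rw [coeff_neg_one_pow_mul_T]
  congr 1
  have hI := h.card_unionOver_add_compCount I
  rw [← Finset.card_eq_iff_eq_univ, Fintype.card_fin, eq_iff_iff]
  omega

end Chromatic

lemma sum_superset_neg_one_pow_card_compl {β : Type*} [Fintype β] [DecidableEq β]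
    (A : Finset β) :
    ∑ F ∈ univ.filter (A ⊆ ·), (-1 : ℤ) ^ Fᶜ.card = if A = univ then 1 else 0 := by
  calc ∑ F ∈ univ.filter (A ⊆ ·), (-1 : ℤ) ^ Fᶜ.card
      = ∑ G ∈ Aᶜ.powerset, (-1) ^ G.card :=
        Finset.sum_nbij' compl compl (by simp) (by simp [Finset.subset_compl_comm]) (by simp)
          (by simp) (by simp)
    _ = if A = univ then 1 else 0 := by simp [Finset.sum_powerset_neg_one_pow_card]

lemma sum_facesOf_neg_one_pow {ι : Type*} [Fintype ι] [DecidableEq ι] {N : ℕ}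
    (α : ι → Finset (Fin N)) :
    ∑ F ∈ facesOf α, (-1 : ℤ) ^ (N - F.card) =
      ∑ I ∈ univ.filter (fun I => unionOver α I = univ), (-1) ^ I.card := by
  have hfaces : facesOf α = univ.inf fun i => (univ.filter (α i ⊆ ·))ᶜ := by
    ext F
    simp [facesOf, Finset.mem_inf]
  have hinf : ∀ I : Finset ι, (I.inf fun i => univ.filter (α i ⊆ ·)) =
      univ.filter (unionOver α I ⊆ ·) := by
    intro I
    ext F
    simp [unionOver, Finset.mem_inf]
  have hcard : ∀ F : Finset (Fin N), N - F.card = Fᶜ.card := by simp [Finset.card_compl]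
  simp_rw [hcard]
  rw [hfaces, Finset.inclusion_exclusion_sum_inf_compl, Finset.powerset_univ, Finset.sum_filter]
  refine Finset.sum_congr rfl fun I _ => ?_
  rw [hinf, sum_superset_neg_one_pow_card_compl, smul_eq_mul, mul_ite, mul_one, mul_zero]

lemma neg_one_pow_sub_of_le {R : Type*} [Ring R] {m k : ℕ} (hk : k ≤ m) :
    (-1 : R) ^ (m - k) = (-1) ^ m * (-1) ^ k := by
  rw [← pow_sub_mul_pow (-1 : R) hk, mul_assoc, ← pow_add, ← two_mul, pow_mul, neg_one_sq,
    one_pow, mul_one]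

/-- lowest coefficient is the reduced Euler characteristic of the auxiliary
complex: under property I with witnesses `α_i ⊆ {1,…,N}`, the coefficient of `t^{n−N}` in
`χ_c(S)(t)` equals `Σ_{F ∈ T(S)} (−1)^{N−|F|} = (−1)^{N−1} χ̃(T(S))`, where
`χ̃(T) = −Σ_{F ∈ T} (−1)^{|F|}`.  (Here `(−1)^{N−1}` is rendered as `(−1)^{N+1}`, which is
the same integer.) -/
theorem stmt_18 {n r N : ℕ}
    (σ : Fin r → Finset (Fin n)) (α : Fin r → Finset (Fin N))
    (h : PropertyI σ α) :
    lcoeff (simpChrom σ) ((n : ℤ) - N) = ∑ F ∈ facesOf α, (-1 : ℤ) ^ (N - F.card) ∧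
    (∑ F ∈ facesOf α, (-1 : ℤ) ^ (N - F.card)) =
      (-1) ^ (N + 1) * (-(∑ F ∈ facesOf α, (-1 : ℤ) ^ F.card)) := by
  refine ⟨h.lcoeff_simpChrom_sub.trans (sum_facesOf_neg_one_pow α).symm, ?_⟩
  rw [mul_neg, Finset.mul_sum, ← Finset.sum_neg_distrib]
  refine Finset.sum_congr rfl fun F _ => ?_
  rw [neg_one_pow_sub_of_le (by simpa using F.card_le_univ), pow_succ]
  ring
end
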